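/- arXiv:1902.03835 — 4 statements merged into one kernel-verified Lean document; each statement's English description precedes it below -/
import Mathlib

section
/- Coarea inequality: Let (X,d) be a complete metric space and let m be a non-negative Borel measure on X which is finite on bounded subsets. Let u ∈ Lip_b(X) with u : X → [0,∞) and set M = sup_X u. Then for Lebesgue-a.e. t > 0 the superlevel set {u > t} has finite perimeter, and ∫₀^M Per({u > t}) dt ≤ ∫_X |∇u| dm. -/
open MeasureTheory Filter Set
open scoped ENNReal Topology
open scoped NNReal

/-- The slope (local Lipschitz constant) of `f` at `x`:
`|∇f|(x) := limsup_{y→x} |f(y)-f(x)|/d(y,x)` (equal to `0` at isolated points). -/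
noncomputable def slope' {X : Type*} [MetricSpace X] (f : X → ℝ) (x : X) : ℝ :=
  Filter.limsup (fun y => |f y - f x| / dist y x) (𝓝[≠] x)

/-- `f ∈ Lip_b(X)`: `f` is Lipschitz, bounded and has bounded support. -/
def LipB {X : Type*} [MetricSpace X] (f : X → ℝ) : Prop :=
  (∃ K : NNReal, LipschitzWith K f) ∧ (∃ C : ℝ, ∀ x, |f x| ≤ C) ∧
    Bornology.IsBounded (Function.support f)

/-- The perimeter of a set `A`:
`Per(A) := inf { liminf_n ∫ |∇f_n| dm : f_n ∈ Lip_b(X), f_n → χ_A in L¹(X,m) }`. -/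
noncomputable def Per {X : Type*} [MetricSpace X] [MeasurableSpace X]
    (m : Measure X) (A : Set X) : ℝ≥0∞ :=
  sInf { p : ℝ≥0∞ | ∃ f : ℕ → X → ℝ, (∀ n, LipB (f n)) ∧
    Tendsto (fun n => ∫⁻ x, ENNReal.ofReal |f n x - A.indicator (fun _ => (1:ℝ)) x| ∂m)
      atTop (𝓝 0) ∧
    p = liminf (fun n => ∫⁻ x, ENNReal.ofReal (slope' (f n) x) ∂m) atTop }

section Aux

set_option linter.unusedSectionVars false
variable {X : Type*} [MetricSpace X]

/-- ENNReal-valued slope. -/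
noncomputable def eslope (f : X → ℝ) (x : X) : ℝ≥0∞ :=
  Filter.limsup (fun y => ENNReal.ofReal (|f y - f x| / dist y x)) (𝓝[≠] x)

lemma quot_nonneg (f : X → ℝ) (x y : X) : 0 ≤ |f y - f x| / dist y x :=
  div_nonneg (abs_nonneg _) dist_nonneg

lemma quot_le {K : ℝ≥0} {f : X → ℝ} (hf : LipschitzWith K f) (x y : X) :
    |f y - f x| / dist y x ≤ K := by
  rcases eq_or_ne y x with rfl | h
  · simp
  · rw [div_le_iff₀ (dist_pos.2 h)]
    have := hf.dist_le_mul y x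
    rwa [Real.dist_eq] at this

lemma ofReal_slope' {K : ℝ≥0} {f : X → ℝ} (hf : LipschitzWith K f) (x : X) :
    ENNReal.ofReal (slope' f x) = eslope f x := by
  rcases (𝓝[≠] x).eq_or_neBot with hbot | hne
  · rw [slope', eslope, hbot]
    rw [limsup_bot]
    have : limsup (fun y => |f y - f x| / dist y x) (⊥ : Filter X) = 0 := by
      rw [limsup, limsSup]
      have h1 : {a : ℝ | ∀ᶠ n in Filter.map (fun y => |f y - f x| / dist y x) ⊥, n ≤ a}
          = univ := by ext a; simp
      rw [h1]
      exact Real.sInf_of_not_bddBelow not_bddBelow_univ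
    rw [this]; simp
  · exact Monotone.map_limsup_of_continuousAt (F := 𝓝[≠] x)
      (fun _ _ h => ENNReal.ofReal_le_ofReal h) _
      ENNReal.continuous_ofReal.continuousAt
      ⟨(K : ℝ), eventually_map.2 (Eventually.of_forall fun y => quot_le hf x y)⟩
      (isCoboundedUnder_le_of_le _ fun y => quot_nonneg f x y)

end Aux

section Aux2

variable {X : Type*} [MetricSpace X]

lemma eslope_zero_of_eventuallyEq {f : X → ℝ} {x : X} (h : ∀ᶠ y in 𝓝 x, f y = f x) :
    eslope f x = 0 := by
  refine le_antisymm (limsup_le_of_le (by isBoundedDefault) ?_) (zero_le)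
  filter_upwards [nhdsWithin_le_nhds h] with y hy
  simp [hy]

lemma eslope_eq_iInf (f : X → ℝ) (x : X) :
    eslope f x = ⨅ n : ℕ, ⨆ y ∈ Metric.ball x (1/((n:ℝ)+1)) ∩ {x}ᶜ,
      ENNReal.ofReal (|f y - f x| / dist y x) := by
  have hb := nhdsWithin_hasBasis (Metric.nhds_basis_ball (x := x)) {x}ᶜ
  rw [eslope, hb.limsup_eq_iInf_iSup]
  apply le_antisymm
  · exact le_iInf fun n => iInf₂_le _ (by positivity)
  · refine le_iInf₂ fun r hr => ?_
    obtain ⟨n, hn⟩ := exists_nat_one_div_lt hr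
    refine iInf_le_of_le n (iSup₂_le fun y hy => ?_)
    exact le_iSup₂ (f := fun (y : X) (_ : y ∈ Metric.ball x r ∩ {x}ᶜ) =>
        ENNReal.ofReal (|f y - f x| / dist y x)) y
      ⟨Metric.ball_subset_ball hn.le hy.1, hy.2⟩

lemma measurable_eslope [MeasurableSpace X] [BorelSpace X] {f : X → ℝ} (hf : Continuous f) :
    Measurable (eslope f) := by
  have key : ∀ r : ℝ, LowerSemicontinuous fun x =>
      ⨆ y ∈ Metric.ball x r ∩ {x}ᶜ, ENNReal.ofReal (|f y - f x| / dist y x) := by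
    intro r x a ha
    obtain ⟨y, hy⟩ := lt_iSup_iff.mp ha
    obtain ⟨hys, hay⟩ := lt_iSup_iff.mp hy
    have hyx : y ≠ x := hys.2
    have hcont : ContinuousAt (fun z => ENNReal.ofReal (|f y - f z| / dist y z)) x := by
      refine ENNReal.continuous_ofReal.continuousAt.comp (ContinuousAt.div ?_ ?_ ?_)
      · exact ((continuous_const.sub hf).abs).continuousAt
      · exact (continuous_const.dist continuous_id).continuousAt
      · simpa [dist_ne_zero] using hyx
    have h1 : ∀ᶠ z in 𝓝 x, a < ENNReal.ofReal (|f y - f z| / dist y z) :=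
      hcont.eventually (eventually_gt_nhds hay)
    have h2 : ∀ᶠ z in 𝓝 x, y ∈ Metric.ball z r := by
      have : ContinuousAt (fun z => dist y z) x := (continuous_const.dist continuous_id).continuousAt
      have := this.eventually (eventually_lt_nhds (by simpa [Metric.mem_ball] using hys.1))
      simpa [Metric.mem_ball] using this
    have h3 : ∀ᶠ z in 𝓝 x, y ∈ ({z} : Set X)ᶜ := by
      have : IsOpen ({y}ᶜ : Set X) := isOpen_compl_singleton
      filter_upwards [this.mem_nhds (by simpa using hyx.symm)] with z hz
      simpa using fun h => hz h.symm
    filter_upwards [h1, h2, h3] with z hz1 hz2 hz3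
    exact hz1.trans_le (le_iSup₂ (f := fun (y : X) (_ : y ∈ Metric.ball z r ∩ {z}ᶜ) =>
      ENNReal.ofReal (|f y - f z| / dist y z)) y ⟨hz2, hz3⟩)
  have heq : eslope f = fun x => ⨅ n : ℕ, ⨆ y ∈ Metric.ball x (1/((n:ℝ)+1)) ∩ {x}ᶜ,
      ENNReal.ofReal (|f y - f x| / dist y x) := funext (eslope_eq_iInf f)
  rw [heq]
  exact Measurable.iInf fun n => (key _).measurable

end Aux2

section Aux3

variable {X : Type*} [MetricSpace X]

/-- The truncation `φ_{t,h} ∘ u`. -/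
noncomputable def trunc (u : X → ℝ) (t h : ℝ) (x : X) : ℝ :=
  min (max ((u x - t) / h) 0) 1

lemma trunc_nonneg (u : X → ℝ) (t h : ℝ) (x : X) : 0 ≤ trunc u t h x :=
  le_min (le_max_right _ _) zero_le_one

lemma trunc_le_one (u : X → ℝ) (t h : ℝ) (x : X) : trunc u t h x ≤ 1 :=
  min_le_right _ _

lemma trunc_eq_zero {u : X → ℝ} {t h : ℝ} (hh : 0 < h) {x : X} (hx : u x ≤ t) :
    trunc u t h x = 0 := by
  have : (u x - t) / h ≤ 0 := div_nonpos_of_nonpos_of_nonneg (by linarith) hh.le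
  rw [trunc, max_eq_right this, min_eq_left zero_le_one]

lemma trunc_eq_one {u : X → ℝ} {t h : ℝ} (hh : 0 < h) {x : X} (hx : t + h ≤ u x) :
    trunc u t h x = 1 := by
  have h1 : (1:ℝ) ≤ (u x - t) / h := (le_div_iff₀ hh).2 (by linarith)
  rw [trunc, min_eq_right (le_max_of_le_left h1)]

lemma abs_trunc_sub_trunc_le {u : X → ℝ} {t h : ℝ} (hh : 0 < h) (a b : X) :
    |trunc u t h a - trunc u t h b| ≤ |u a - u b| / h := by
  have h1 : |trunc u t h a - trunc u t h b| ≤ |max ((u a - t)/h) 0 - max ((u b - t)/h) 0| := by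
    have := abs_min_sub_min_le_max (max ((u a - t)/h) 0) 1 (max ((u b - t)/h) 0) 1
    simpa [trunc] using this
  refine h1.trans ((abs_max_sub_max_le_abs _ _ _).trans ?_)
  have h2 : (u a - t)/h - (u b - t)/h = (u a - u b)/h := by ring
  rw [h2, abs_div, abs_of_pos hh]

lemma trunc_lipschitz {K : ℝ≥0} {u : X → ℝ} (hK : LipschitzWith K u) {t h : ℝ} (hh : 0 < h) :
    LipschitzWith (Real.toNNReal h⁻¹ * K) (trunc u t h) := by
  refine LipschitzWith.of_dist_le_mul fun a b => ?_
  rw [Real.dist_eq]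
  calc |trunc u t h a - trunc u t h b| ≤ |u a - u b| / h := abs_trunc_sub_trunc_le hh a b
    _ = h⁻¹ * |u a - u b| := by rw [div_eq_inv_mul]
    _ ≤ h⁻¹ * (K * dist a b) := by
        refine mul_le_mul_of_nonneg_left ?_ (inv_nonneg.2 hh.le)
        have := hK.dist_le_mul a b
        rwa [Real.dist_eq] at this
    _ = (Real.toNNReal h⁻¹ * K : ℝ≥0) * dist a b := by
        rw [← mul_assoc]
        congr 1
        push_cast
        rw [Real.coe_toNNReal _ (inv_nonneg.2 hh.le)]

lemma eslope_trunc_le {K : ℝ≥0} {u : X → ℝ} (hK : LipschitzWith K u) {t h : ℝ} (hh : 0 < h)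
    (x : X) :
    eslope (trunc u t h) x ≤
      ENNReal.ofReal h⁻¹ * (u ⁻¹' Icc t (t+h)).indicator (eslope u) x := by
  have hucont : Continuous u := hK.continuous
  rcases lt_or_ge (u x) t with hx | hx
  · rw [indicator_of_notMem (by simp [mem_Icc]; intro h'; linarith), mul_zero]
    refine le_of_eq (eslope_zero_of_eventuallyEq ?_)
    have : ∀ᶠ y in 𝓝 x, u y < t := (hucont.continuousAt).eventually (eventually_lt_nhds hx)
    filter_upwards [this] with y hy
    rw [trunc_eq_zero hh hy.le, trunc_eq_zero hh (lt_of_lt_of_le hx le_rfl).le]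
  rcases lt_or_ge (t + h) (u x) with hx' | hx'
  · rw [indicator_of_notMem (by simp [mem_Icc]; intro h'; linarith), mul_zero]
    refine le_of_eq (eslope_zero_of_eventuallyEq ?_)
    have : ∀ᶠ y in 𝓝 x, t + h < u y := (hucont.continuousAt).eventually (eventually_gt_nhds hx')
    filter_upwards [this] with y hy
    rw [trunc_eq_one hh hy.le, trunc_eq_one hh hx'.le]
  · rw [indicator_of_mem (by simp [mem_Icc]; exact ⟨hx, hx'⟩)]
    have hq : ∀ y, ENNReal.ofReal (|trunc u t h y - trunc u t h x| / dist y x) ≤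
        ENNReal.ofReal h⁻¹ * ENNReal.ofReal (|u y - u x| / dist y x) := by
      intro y
      rw [← ENNReal.ofReal_mul (inv_nonneg.2 hh.le)]
      refine ENNReal.ofReal_le_ofReal ?_
      have hrw : h⁻¹ * (|u y - u x| / dist y x) = (|u y - u x| / h) / dist y x := by ring
      rw [hrw]
      rcases eq_or_ne y x with rfl | hxy
      · simp
      · exact div_le_div_of_nonneg_right (abs_trunc_sub_trunc_le hh y x) dist_nonneg
    calc eslope (trunc u t h) x
        ≤ limsup (fun y => ENNReal.ofReal h⁻¹ * ENNReal.ofReal (|u y - u x| / dist y x)) (𝓝[≠] x) :=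
          limsup_le_limsup (Eventually.of_forall hq)
      _ = ENNReal.ofReal h⁻¹ * eslope u x := ENNReal.limsup_const_mul_of_ne_top ENNReal.ofReal_ne_top

end Aux3


/-- **Coarea inequality**: if `(X,d)` is complete, `m` is a Borel measure finite on
bounded sets, `u ∈ Lip_b(X)` is non-negative and `M = sup_X u`, then for a.e. `t > 0`
the set `{u > t}` has finite perimeter and `∫₀^M Per({u > t}) dt ≤ ∫_X |∇u| dm`. -/
theorem coarea_inequality
    {X : Type*} [MetricSpace X] [CompleteSpace X] [MeasurableSpace X] [BorelSpace X]
    (m : Measure X) (hbdd : ∀ s : Set X, Bornology.IsBounded s → m s < ∞)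
    (u : X → ℝ) (hu : LipB u) (hpos : ∀ x, 0 ≤ u x) :
    (∀ᵐ t ∂(volume.restrict (Set.Ioi (0:ℝ))), Per m {x | t < u x} < ∞) ∧
    (∫⁻ t in Set.Ioo (0:ℝ) (⨆ x, u x), Per m {x | t < u x}) ≤
      ∫⁻ x, ENNReal.ofReal (slope' u x) ∂m := by
  obtain ⟨⟨K, hK⟩, ⟨C, hC⟩, hsupp⟩ := hu
  have hucont : Continuous u := hK.continuous
  have humeas : Measurable u := hucont.measurable
  set G : X → ℝ≥0∞ := eslope u with hG
  have hGmeas : Measurable G := measurable_eslope hucont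
  have hGle : ∀ x, G x ≤ (closure (Function.support u)).indicator (fun _ => (K:ℝ≥0∞)) x := by
    intro x
    by_cases hx : x ∈ closure (Function.support u)
    · rw [indicator_of_mem hx]
      refine limsup_le_of_le (by isBoundedDefault) (Eventually.of_forall fun y => ?_)
      calc ENNReal.ofReal (|u y - u x| / dist y x) ≤ ENNReal.ofReal (K:ℝ) :=
            ENNReal.ofReal_le_ofReal (quot_le hK x y)
        _ = (K:ℝ≥0∞) := ENNReal.ofReal_coe_nnreal
    · rw [indicator_of_notMem hx]
      have hx0 : u x = 0 := by
        by_contra h0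
        exact hx (subset_closure h0)
      have hev : ∀ᶠ y in 𝓝 x, u y = u x := by
        filter_upwards [isClosed_closure.isOpen_compl.mem_nhds hx] with y hy
        have hy0 : u y = 0 := by
          by_contra h0
          exact hy (subset_closure h0)
        rw [hy0, hx0]
      exact le_of_eq (eslope_zero_of_eventuallyEq hev)
  have hGint : ∫⁻ x, G x ∂m < ∞ := by
    calc ∫⁻ x, G x ∂m
        ≤ ∫⁻ x, (closure (Function.support u)).indicator (fun _ => (K:ℝ≥0∞)) x ∂m :=
          lintegral_mono hGle
      _ = K * m (closure (Function.support u)) :=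
          lintegral_indicator_const isClosed_closure.measurableSet _
      _ < ∞ := ENNReal.mul_lt_top ENNReal.coe_lt_top (hbdd _ hsupp.closure)
  set μG := m.withDensity G with hμG
  have hμGuniv : μG univ = ∫⁻ x, G x ∂m := by
    rw [hμG, withDensity_apply _ MeasurableSet.univ, Measure.restrict_univ]
  haveI hμGfin : IsFiniteMeasure μG := ⟨by rw [hμGuniv]; exact hGint⟩
  set ν := μG.map u with hν
  have hνuniv : ν univ = ∫⁻ x, G x ∂m := by
    rw [hν, Measure.map_apply humeas MeasurableSet.univ, preimage_univ, hμGuniv]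
  haveI hνfin : IsFiniteMeasure ν := ⟨by rw [hνuniv]; exact hGint⟩
  have hνIcc : ∀ t h : ℝ, ν (Icc t (t+h)) = ∫⁻ x in u ⁻¹' Icc t (t+h), G x ∂m := by
    intro t h
    rw [hν, Measure.map_apply humeas measurableSet_Icc, hμG,
      withDensity_apply _ (humeas measurableSet_Icc)]
  -- the measurable majorant
  set Fn : ℕ → ℝ → ℝ≥0∞ :=
    fun n t => ENNReal.ofReal ((n:ℝ)+1) * ν (Icc t (t + 1/((n:ℝ)+1))) with hFn
  have hEmeas : ∀ h : ℝ, MeasurableSet {p : ℝ×ℝ | p.1 ≤ p.2 ∧ p.2 ≤ p.1 + h} := by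
    intro h
    exact ((isClosed_le continuous_fst continuous_snd).inter
      (isClosed_le continuous_snd (continuous_fst.add continuous_const))).measurableSet
  have hνIccMeas : ∀ h : ℝ, Measurable fun t => ν (Icc t (t+h)) := by
    intro h
    have h2 : (fun t => ν (Icc t (t+h)))
        = fun t => ν (Prod.mk t ⁻¹' {p : ℝ×ℝ | p.1 ≤ p.2 ∧ p.2 ≤ p.1 + h}) := by
      funext t
      have h3 : Prod.mk t ⁻¹' {p : ℝ×ℝ | p.1 ≤ p.2 ∧ p.2 ≤ p.1 + h} = Icc t (t+h) := by
        ext s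
        simp [mem_Icc, Set.preimage, mem_setOf_eq]
      rw [h3]
    rw [h2]
    exact measurable_measure_prodMk_left (hEmeas h)
  have hFnmeas : ∀ n, Measurable (Fn n) := fun n =>
    (hνIccMeas (1/((n:ℝ)+1))).const_mul _
  set P : ℝ → ℝ≥0∞ := fun t => liminf (fun n => Fn n t) atTop with hP
  have hPmeas : Measurable P := Measurable.liminf hFnmeas
  have hkey : ∀ t : ℝ, 0 < t → Per m {x | t < u x} ≤ P t := by
    intro t ht
    have hh : ∀ n : ℕ, (0:ℝ) < 1/((n:ℝ)+1) := fun n => by positivity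
    set w : ℕ → X → ℝ := fun n => trunc u t (1/((n:ℝ)+1)) with hw
    have hwlip : ∀ n : ℕ, LipschitzWith (Real.toNNReal (1/((n:ℝ)+1))⁻¹ * K) (w n) :=
      fun n => trunc_lipschitz hK (hh n)
    have hwLipB : ∀ n, LipB (w n) := by
      intro n
      refine ⟨⟨_, hwlip n⟩, ⟨1, fun x => ?_⟩, ?_⟩
      · rw [abs_le]
        refine ⟨by linarith [trunc_nonneg u t (1/((n:ℝ)+1)) x], trunc_le_one u t _ x⟩
      · refine hsupp.subset fun x hx => ?_
        simp only [Function.mem_support] at hx ⊢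
        intro h0
        exact hx (trunc_eq_zero (hh n) (by rw [h0]; exact ht.le))
    have hAmeas : MeasurableSet {x : X | t < u x} := measurableSet_lt measurable_const humeas
    have hAsub : {x : X | t < u x} ⊆ closure (Function.support u) := by
      intro x hx
      exact subset_closure (ne_of_gt (lt_trans ht hx))
    have hmA : m {x : X | t < u x} ≠ ∞ :=
      (lt_of_le_of_lt (measure_mono hAsub) (hbdd _ hsupp.closure)).ne
    have hL1 : Tendsto (fun n => ∫⁻ x, ENNReal.ofReal
        |w n x - ({x : X | t < u x}).indicator (fun _ => (1:ℝ)) x| ∂m) atTop (𝓝 0) := by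
      have hconv := tendsto_lintegral_of_dominated_convergence
        (μ := m)
        (F := fun n x => ENNReal.ofReal
          |w n x - ({x : X | t < u x}).indicator (fun _ => (1:ℝ)) x|)
        (f := fun _ => 0)
        (({x : X | t < u x}).indicator (fun _ => (1:ℝ≥0∞)))
        (fun n => (((hwlip n).continuous.measurable.sub
            (measurable_const.indicator hAmeas)).abs).ennreal_ofReal)
        (fun n => Eventually.of_forall fun x => ?_)
        (by rw [lintegral_indicator_const hAmeas, one_mul]; exact hmA)
        (Eventually.of_forall fun x => ?_)
      · simpa using hconv
      · -- bound
        beta_reduce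
        by_cases hx : x ∈ {x : X | t < u x}
        · rw [indicator_of_mem hx, indicator_of_mem hx]
          have h01 : |w n x - (fun _ => (1:ℝ)) x| ≤ 1 := by
            have ha := trunc_le_one u t (1/((n:ℝ)+1)) x
            have hb := trunc_nonneg u t (1/((n:ℝ)+1)) x
            rw [abs_le]
            constructor
            · simp only [hw]
              linarith
            · simp only [hw]
              linarith
          calc ENNReal.ofReal |w n x - (fun _ => (1:ℝ)) x|
              ≤ ENNReal.ofReal 1 := ENNReal.ofReal_le_ofReal h01
            _ = (fun _ => (1:ℝ≥0∞)) x := ENNReal.ofReal_one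
        · rw [indicator_of_notMem hx, indicator_of_notMem hx]
          have hw0 : w n x = 0 := trunc_eq_zero (hh n) (not_lt.1 hx)
          simp [hw0]
      · -- pointwise convergence
        beta_reduce
        by_cases hx : x ∈ {x : X | t < u x}
        · have hxt : (0:ℝ) < u x - t := sub_pos.2 (show t < u x from hx)
          obtain ⟨N, hN⟩ := exists_nat_one_div_lt hxt
          have hev : ∀ᶠ n in atTop, ENNReal.ofReal
              |w n x - ({x : X | t < u x}).indicator (fun _ => (1:ℝ)) x| = 0 := by
            filter_upwards [eventually_ge_atTop N] with n hn
            have hle : 1/((n:ℝ)+1) ≤ 1/((N:ℝ)+1) := by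
              have hcast : ((N:ℝ)) ≤ (n:ℝ) := Nat.cast_le.2 hn
              apply one_div_le_one_div_of_le
              · positivity
              · linarith
            have hw1 : w n x = 1 := trunc_eq_one (hh n) (by
              have := lt_of_le_of_lt hle hN
              linarith)
            rw [indicator_of_mem hx, hw1]
            simp
          refine Tendsto.congr' ?_ tendsto_const_nhds
          filter_upwards [hev] with n hn
          exact hn.symm
        · have : ∀ n : ℕ, ENNReal.ofReal
              |w n x - ({x : X | t < u x}).indicator (fun _ => (1:ℝ)) x| = 0 := by
            intro n
            have hw0 : w n x = 0 := trunc_eq_zero (hh n) (not_lt.1 hx)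
            rw [indicator_of_notMem hx, hw0]
            simp
          simp only [this]
          exact tendsto_const_nhds
    have h1 : Per m {x : X | t < u x} ≤
        liminf (fun n => ∫⁻ x, ENNReal.ofReal (slope' (w n) x) ∂m) atTop :=
      sInf_le ⟨w, hwLipB, hL1, rfl⟩
    refine h1.trans (liminf_le_liminf (Eventually.of_forall fun n => ?_))
    calc ∫⁻ x, ENNReal.ofReal (slope' (w n) x) ∂m
        = ∫⁻ x, eslope (w n) x ∂m := lintegral_congr fun x => ofReal_slope' (hwlip n) x
      _ ≤ ∫⁻ x, ENNReal.ofReal (1/((n:ℝ)+1))⁻¹ *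
            (u ⁻¹' Icc t (t + 1/((n:ℝ)+1))).indicator G x ∂m :=
          lintegral_mono fun x => eslope_trunc_le hK (hh n) x
      _ = ENNReal.ofReal (1/((n:ℝ)+1))⁻¹ *
            ∫⁻ x, (u ⁻¹' Icc t (t + 1/((n:ℝ)+1))).indicator G x ∂m :=
          lintegral_const_mul' _ _ ENNReal.ofReal_ne_top
      _ = Fn n t := by
          rw [lintegral_indicator (humeas measurableSet_Icc), ← hνIcc]
          simp only [hFn, one_div, inv_inv]
  have hswap : ∀ h : ℝ, 0 < h →
      (∫⁻ t in Ioi (0:ℝ), ν (Icc t (t+h))) ≤ ENNReal.ofReal h * ν univ := by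
    intro h hh
    set E : Set (ℝ×ℝ) := {p | p.1 ≤ p.2 ∧ p.2 ≤ p.1 + h} with hE
    have hEm := hEmeas h
    have h1 : ∀ t : ℝ, ν (Icc t (t+h)) = ∫⁻ s, E.indicator 1 (t, s) ∂ν := by
      intro t
      rw [← lintegral_indicator_one measurableSet_Icc]
      refine lintegral_congr fun s => ?_
      by_cases hs : s ∈ Icc t (t+h)
      · rw [indicator_of_mem hs, indicator_of_mem (show (t,s) ∈ E from ⟨hs.1, hs.2⟩)]
        simp
      · rw [indicator_of_notMem hs,
          indicator_of_notMem (show (t,s) ∉ E from fun hc => hs ⟨hc.1, hc.2⟩)]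
    calc (∫⁻ t in Ioi (0:ℝ), ν (Icc t (t+h)))
        = ∫⁻ t in Ioi (0:ℝ), ∫⁻ s, E.indicator 1 (t, s) ∂ν := lintegral_congr h1
      _ = ∫⁻ s, (∫⁻ t in Ioi (0:ℝ), E.indicator 1 (t, s)) ∂ν :=
          lintegral_lintegral_swap (measurable_one.indicator hEm).aemeasurable
      _ ≤ ∫⁻ s, ENNReal.ofReal h ∂ν := by
          refine lintegral_mono fun s => ?_
          have h2 : (fun t => E.indicator (1 : ℝ×ℝ → ℝ≥0∞) (t, s))
              = (Icc (s-h) s).indicator (fun _ => (1:ℝ≥0∞)) := by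
            funext t'
            by_cases ht' : t' ∈ Icc (s-h) s
            · rw [indicator_of_mem ht',
                indicator_of_mem (show (t',s) ∈ E from ⟨ht'.2, by linarith [ht'.1]⟩)]
              simp
            · rw [indicator_of_notMem ht',
                indicator_of_notMem (show (t',s) ∉ E from
                  fun hc => ht' ⟨by linarith [hc.2], hc.1⟩)]
          rw [h2]
          calc (∫⁻ t in Ioi (0:ℝ), (Icc (s-h) s).indicator (fun _ => (1:ℝ≥0∞)) t)
              = 1 * (volume.restrict (Ioi (0:ℝ))) (Icc (s-h) s) :=
                lintegral_indicator_const measurableSet_Icc _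
            _ ≤ volume (Icc (s-h) s) := by
                rw [one_mul]
                exact Measure.restrict_le_self _
            _ = ENNReal.ofReal h := by rw [Real.volume_Icc, sub_sub_cancel]
      _ = ENNReal.ofReal h * ν univ := lintegral_const _
  have hbound : (∫⁻ t in Ioi (0:ℝ), P t) ≤ ∫⁻ x, G x ∂m := by
    calc (∫⁻ t in Ioi (0:ℝ), P t)
        ≤ liminf (fun n => ∫⁻ t in Ioi (0:ℝ), Fn n t) atTop := lintegral_liminf_le hFnmeas
      _ ≤ liminf (fun _ : ℕ => ν univ) atTop := by
          refine liminf_le_liminf (Eventually.of_forall fun n => ?_)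
          have hpos' : (0:ℝ) < 1/((n:ℝ)+1) := by positivity
          calc (∫⁻ t in Ioi (0:ℝ), Fn n t)
              = ENNReal.ofReal ((n:ℝ)+1) *
                  ∫⁻ t in Ioi (0:ℝ), ν (Icc t (t + 1/((n:ℝ)+1))) := by
                simp only [hFn]
                exact lintegral_const_mul' _ _ ENNReal.ofReal_ne_top
            _ ≤ ENNReal.ofReal ((n:ℝ)+1) * (ENNReal.ofReal (1/((n:ℝ)+1)) * ν univ) :=
                mul_le_mul_right (hswap _ hpos') _
            _ = (ENNReal.ofReal ((n:ℝ)+1) * ENNReal.ofReal (1/((n:ℝ)+1))) * ν univ :=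
                (mul_assoc _ _ _).symm
            _ = ν univ := by
                rw [← ENNReal.ofReal_mul (by positivity),
                  mul_one_div_cancel (by positivity : ((n:ℝ)+1) ≠ 0)]
                simp
      _ = ν univ := liminf_const _
      _ = ∫⁻ x, G x ∂m := hνuniv
  constructor
  · have h1 : ∀ᵐ t ∂(volume.restrict (Ioi (0:ℝ))), P t < ∞ :=
      ae_lt_top hPmeas (lt_of_le_of_lt hbound hGint).ne
    filter_upwards [h1, ae_restrict_mem measurableSet_Ioi] with t h1t h2t
    exact lt_of_le_of_lt (hkey t h2t) h1t
  · calc (∫⁻ t in Ioo (0:ℝ) (⨆ x, u x), Per m {x | t < u x})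
        ≤ ∫⁻ t in Ioo (0:ℝ) (⨆ x, u x), P t := by
          refine lintegral_mono_ae ?_
          filter_upwards [ae_restrict_mem measurableSet_Ioo] with t ht'
          exact hkey t ht'.1
      _ ≤ ∫⁻ t in Ioi (0:ℝ), P t :=
          lintegral_mono' (Measure.restrict_mono Ioo_subset_Ioi_self le_rfl) le_rfl
      _ ≤ ∫⁻ x, G x ∂m := hbound
      _ = ∫⁻ x, ENNReal.ofReal (slope' u x) ∂m :=
          lintegral_congr fun x => (ofReal_slope' hK x).symm
end

section
/- Let T > 0 be fixed and define f₁ : (0,∞) → (0,∞) by f₁(x) := √x / arctan(√(e^{Tx} − 1)). Then f₁ is an increasing function on (0,∞) and f₁(x) ≥ 1/√T for every x > 0; moreover lim_{x→0⁺} f₁(x) = 1/√T. -/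
open Real Filter Set
open scoped Topology

lemma hasDerivAt_k_aux (x : ℝ) : HasDerivAt (fun v : ℝ => Real.arctan v - v / (1 + v^2))
    (2*x^2/(1+x^2)^2) x := by
  have h1 : (1 + x^2) ≠ 0 := by positivity
  have hd : HasDerivAt (fun v : ℝ => v / (1 + v^2))
      ((1*(1+x^2) - x*(↑2*x^1))/(1+x^2)^2) x :=
    (hasDerivAt_id x).div ((hasDerivAt_pow 2 x).const_add 1) h1
  have h := (Real.hasDerivAt_arctan x).sub hd
  refine h.congr_deriv ?_
  field_simp
  ring

lemma aux_arctan_ge (v : ℝ) (hv : 0 ≤ v) : v / (1 + v^2) ≤ Real.arctan v := by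
  have hdiff : Differentiable ℝ (fun v : ℝ => Real.arctan v - v / (1 + v^2)) :=
    fun x => (hasDerivAt_k_aux x).differentiableAt
  have key : MonotoneOn (fun v : ℝ => Real.arctan v - v / (1 + v^2)) (Set.Ici 0) := by
    apply monotoneOn_of_deriv_nonneg (convex_Ici 0) hdiff.continuous.continuousOn
      (fun x _ => (hdiff x).differentiableWithinAt)
    intro x hx
    rw [(hasDerivAt_k_aux x).deriv]
    positivity
  have := key Set.self_mem_Ici (Set.mem_Ici.mpr hv) hv
  simpa using this

lemma hasDerivAt_h_aux (x : ℝ) : HasDerivAt (fun v : ℝ => v * Real.arctan v - Real.log (1 + v^2))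
    (Real.arctan x - x / (1 + x^2)) x := by
  have h1 : (1 + x^2) ≠ 0 := by positivity
  have hd1 : HasDerivAt (fun v : ℝ => v * Real.arctan v)
      (1 * Real.arctan x + x * (1/(1+x^2))) x :=
    (hasDerivAt_id x).mul (Real.hasDerivAt_arctan x)
  have hd2 : HasDerivAt (fun v : ℝ => Real.log (1 + v^2)) ((↑2*x^1) / (1 + x^2)) x :=
    ((hasDerivAt_pow 2 x).const_add 1).log h1
  refine (hd1.sub hd2).congr_deriv ?_
  field_simp
  ring

lemma key_log_le (v : ℝ) (hv : 0 ≤ v) : Real.log (1 + v^2) ≤ v * Real.arctan v := by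
  have hdiff : Differentiable ℝ (fun v : ℝ => v * Real.arctan v - Real.log (1 + v^2)) :=
    fun x => (hasDerivAt_h_aux x).differentiableAt
  have key : MonotoneOn (fun v : ℝ => v * Real.arctan v - Real.log (1 + v^2)) (Set.Ici 0) := by
    apply monotoneOn_of_deriv_nonneg (convex_Ici 0) hdiff.continuous.continuousOn
      (fun x _ => (hdiff x).differentiableWithinAt)
    intro x hx
    rw [(hasDerivAt_h_aux x).deriv, sub_nonneg]
    exact aux_arctan_ge x (le_of_lt (by simpa using hx))
  have := key Set.self_mem_Ici (Set.mem_Ici.mpr hv) hv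
  simp at this
  linarith

lemma exp_sub_one_pos_aux {T x : ℝ} (hT : 0 < T) (hx : 0 < x) : 0 < Real.exp (T*x) - 1 := by
  have : (1:ℝ) = Real.exp 0 := (Real.exp_zero).symm
  rw [this]; simpa using Real.exp_lt_exp.2 (by positivity)

lemma hasDerivAt_theta_aux (T : ℝ) (hT : 0 < T) {x : ℝ} (hx : 0 < x) :
    HasDerivAt (fun x => Real.arctan (Real.sqrt (Real.exp (T*x) - 1)))
      (T / (2 * Real.sqrt (Real.exp (T*x) - 1))) x := by
  have hy : 0 < Real.exp (T*x) - 1 := exp_sub_one_pos_aux hT hx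
  have h1 : HasDerivAt (fun x : ℝ => T*x) T x := by
    simpa using (hasDerivAt_id x).const_mul T
  have h2 := h1.exp
  have h3 := h2.sub_const 1
  have h4 := (Real.hasDerivAt_sqrt (ne_of_gt hy)).comp x h3
  have h5 := (Real.hasDerivAt_arctan (Real.sqrt (Real.exp (T*x) - 1))).comp x h4
  refine h5.congr_deriv ?_
  have hu2 : Real.sqrt (Real.exp (T*x) - 1) ^ 2 = Real.exp (T*x) - 1 := Real.sq_sqrt hy.le
  have hune : Real.sqrt (Real.exp (T*x) - 1) ≠ 0 := by positivity
  rw [hu2]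
  have hene : Real.exp (T*x) ≠ 0 := Real.exp_ne_zero _
  field_simp
  ring

lemma q_antitone_aux (T : ℝ) (hT : 0 < T) :
    AntitoneOn (fun x => Real.arctan (Real.sqrt (Real.exp (T*x) - 1)) ^ 2 / x) (Set.Ioi 0) := by
  have hasq : ∀ x : ℝ, 0 < x → HasDerivAt
      (fun x => Real.arctan (Real.sqrt (Real.exp (T*x) - 1)) ^ 2 / x)
      (((↑2 * Real.arctan (Real.sqrt (Real.exp (T*x) - 1)) ^ 1 *
          (T / (2 * Real.sqrt (Real.exp (T*x) - 1)))) * x -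
        Real.arctan (Real.sqrt (Real.exp (T*x) - 1)) ^ 2 * 1) / x ^ 2) x := by
    intro x hx
    exact ((hasDerivAt_theta_aux T hT hx).pow 2).div (hasDerivAt_id x) (ne_of_gt hx)
  apply antitoneOn_of_deriv_nonpos (convex_Ioi 0)
  · intro x hx
    exact ((hasq x hx).continuousAt).continuousWithinAt
  · intro x hx
    rw [interior_Ioi] at hx
    exact (hasq x hx).differentiableAt.differentiableWithinAt
  · intro x hx
    rw [interior_Ioi] at hx
    rw [(hasq x hx).deriv]
    set v := Real.sqrt (Real.exp (T*x) - 1) with hv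
    have hy : 0 < Real.exp (T*x) - 1 := exp_sub_one_pos_aux hT hx
    have hvpos : 0 < v := Real.sqrt_pos.2 hy
    have hθpos : 0 < Real.arctan v := by simpa using Real.arctan_strictMono hvpos
    apply div_nonpos_of_nonpos_of_nonneg _ (by positivity)
    rw [sub_nonpos]
    have hTx : T * x = Real.log (1 + v^2) := by
      rw [hv, Real.sq_sqrt hy.le]
      ring_nf
      rw [Real.log_exp]
    have hkey : T * x ≤ v * Real.arctan v := by
      rw [hTx]; exact key_log_le v hvpos.le
    have : ↑2 * Real.arctan v ^ 1 * (T / (2 * v)) * x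
        = Real.arctan v * (T * x) / v := by field_simp
    rw [this, mul_one, pow_two]
    rw [div_le_iff₀ hvpos]
    calc Real.arctan v * (T * x) ≤ Real.arctan v * (v * Real.arctan v) := by
          exact mul_le_mul_of_nonneg_left hkey hθpos.le
      _ = Real.arctan v * Real.arctan v * v := by ring

lemma q_tendsto_aux (T : ℝ) (hT : 0 < T) :
    Tendsto (fun x => Real.arctan (Real.sqrt (Real.exp (T*x) - 1)) ^ 2 / x) (𝓝[>] 0) (𝓝 T) := by
  set v : ℝ → ℝ := fun x => Real.sqrt (Real.exp (T*x) - 1) with hv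
  have h1 : HasDerivAt (fun x : ℝ => T*x) T 0 := by simpa using (hasDerivAt_id (0:ℝ)).const_mul T
  have hA0 : HasDerivAt (fun x : ℝ => Real.exp (T*x)) T 0 := by simpa using h1.exp
  have hA1 : Tendsto (fun x : ℝ => (Real.exp (T*x) - 1)/x) (𝓝[≠] 0) (𝓝 T) := by
    have := hasDerivAt_iff_tendsto_slope.1 hA0
    apply this.congr
    intro y
    simp [slope_def_field, div_eq_inv_mul]
  have hA : Tendsto (fun x : ℝ => (Real.exp (T*x) - 1)/x) (𝓝[>] 0) (𝓝 T) :=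
    hA1.mono_left (nhdsWithin_mono 0 (fun y hy => ne_of_gt hy))
  have hB0 : Tendsto v (𝓝[>] 0) (𝓝[≠] 0) := by
    rw [tendsto_nhdsWithin_iff]
    constructor
    · have hc : ContinuousAt v 0 := by
        apply Real.continuous_sqrt.continuousAt.comp
        exact ((Real.continuous_exp.comp (continuous_const.mul continuous_id)).sub
          continuous_const).continuousAt
      have h0 : v 0 = 0 := by simp [hv]
      have hct := hc.tendsto
      rw [h0] at hct
      exact hct.mono_left nhdsWithin_le_nhds
    · filter_upwards [self_mem_nhdsWithin] with x hx
      exact ne_of_gt (Real.sqrt_pos.2 (exp_sub_one_pos_aux hT hx))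
  have hB1 : Tendsto (fun y : ℝ => Real.arctan y / y) (𝓝[≠] 0) (𝓝 1) := by
    have hd : HasDerivAt Real.arctan 1 0 := by simpa using Real.hasDerivAt_arctan 0
    have := hasDerivAt_iff_tendsto_slope.1 hd
    apply this.congr
    intro y
    simp [slope_def_field, div_eq_inv_mul]
  have hB : Tendsto (fun x : ℝ => Real.arctan (v x) / v x) (𝓝[>] 0) (𝓝 1) := hB1.comp hB0
  have hmul : Tendsto (fun x : ℝ => (Real.arctan (v x) / v x)^2 * ((Real.exp (T*x) - 1)/x))
      (𝓝[>] 0) (𝓝 T) := by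
    have := ((hB.pow 2).mul hA)
    simpa using this
  apply hmul.congr'
  filter_upwards [self_mem_nhdsWithin] with x hx
  have hy : 0 < Real.exp (T*x) - 1 := exp_sub_one_pos_aux hT hx
  have hvpos : 0 < v x := Real.sqrt_pos.2 hy
  have hv2 : v x ^ 2 = Real.exp (T*x) - 1 := Real.sq_sqrt hy.le
  rw [← hv2]
  field_simp
  rw [Real.sqrt_sq hvpos.le]

/-- For fixed `T > 0`, the function `f₁(x) = √x / arctan(√(e^{Tx} − 1))` is increasing
on `(0,∞)`, bounded below by `1/√T`, and tends to `1/√T` as `x → 0⁺`. -/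
theorem f_one_increasing_and_bounded (T : ℝ) (hT : 0 < T) :
    MonotoneOn
      (fun x : ℝ => Real.sqrt x / Real.arctan (Real.sqrt (Real.exp (T * x) - 1)))
      (Set.Ioi 0) ∧
    (∀ x : ℝ, 0 < x →
      1 / Real.sqrt T ≤
        Real.sqrt x / Real.arctan (Real.sqrt (Real.exp (T * x) - 1))) ∧
    Tendsto (fun x : ℝ => Real.sqrt x / Real.arctan (Real.sqrt (Real.exp (T * x) - 1)))
      (𝓝[>] 0) (𝓝 (1 / Real.sqrt T)) := by
  set θ : ℝ → ℝ := fun x => Real.arctan (Real.sqrt (Real.exp (T * x) - 1)) with hθdef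
  have hθpos : ∀ x : ℝ, 0 < x → 0 < θ x := by
    intro x hx
    have hy : 0 < Real.exp (T*x) - 1 := exp_sub_one_pos_aux hT hx
    simpa [hθdef] using Real.arctan_strictMono (Real.sqrt_pos.2 hy)
  -- f₁ x = (√(q x))⁻¹ on Ioi 0
  have hf_eq : ∀ x : ℝ, 0 < x → Real.sqrt x / θ x = (Real.sqrt (θ x ^ 2 / x))⁻¹ := by
    intro x hx
    have hθ := hθpos x hx
    rw [Real.sqrt_div (sq_nonneg _), Real.sqrt_sq hθ.le, inv_div]
  have hqle : ∀ x : ℝ, 0 < x → θ x ^ 2 / x ≤ T := by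
    intro x hx
    apply ge_of_tendsto (q_tendsto_aux T hT)
    filter_upwards [Ioo_mem_nhdsGT_of_mem ⟨le_refl 0, hx⟩] with y hy
    exact q_antitone_aux T hT hy.1 hx hy.2.le
  refine ⟨?_, ?_, ?_⟩
  · -- MonotoneOn
    intro a ha b hb hab
    have ha' : (0:ℝ) < a := ha
    have hb' : (0:ℝ) < b := hb
    have hq : θ b ^ 2 / b ≤ θ a ^ 2 / a := q_antitone_aux T hT ha hb hab
    have hθa := hθpos a ha'
    have hθb := hθpos b hb'
    show Real.sqrt a / θ a ≤ Real.sqrt b / θ b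
    rw [hf_eq a ha', hf_eq b hb']
    apply inv_anti₀
    · exact Real.sqrt_pos.2 (by positivity)
    · exact Real.sqrt_le_sqrt hq
  · -- bound
    intro x hx
    have hθ := hθpos x hx
    have hq := hqle x hx
    have hsq : θ x ^ 2 ≤ T * x := by
      rw [div_le_iff₀ hx] at hq
      linarith
    have hθle : θ x ≤ Real.sqrt (T * x) := by
      have h := Real.sqrt_le_sqrt hsq
      rwa [Real.sqrt_sq hθ.le] at h
    rw [div_le_div_iff₀ (Real.sqrt_pos.2 hT) hθ, one_mul]
    calc θ x ≤ Real.sqrt (T * x) := hθle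
      _ = Real.sqrt T * Real.sqrt x := Real.sqrt_mul hT.le x
      _ = Real.sqrt x * Real.sqrt T := mul_comm _ _
  · -- limit
    have hs : Real.sqrt T ≠ 0 := ne_of_gt (Real.sqrt_pos.2 hT)
    have hcomp : Tendsto (fun x : ℝ => (Real.sqrt (θ x ^ 2 / x))⁻¹) (𝓝[>] 0)
        (𝓝 (Real.sqrt T)⁻¹) :=
      (Real.continuous_sqrt.continuousAt.tendsto.comp (q_tendsto_aux T hT)).inv₀ hs
    rw [one_div]
    apply hcomp.congr'
    filter_upwards [self_mem_nhdsWithin] with x hx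
    exact (hf_eq x hx).symm
end

section
/- Let T > 0 be fixed and define f₂ : (0,∞) → (0,∞) by f₂(x) := √x / log(e^{Tx} + √(e^{2Tx} − 1)). Then f₂ is a decreasing function on (0,∞). -/
open Real Set Filter

noncomputable def sfun (u : ℝ) : ℝ := Real.sqrt (Real.exp (2*u) - 1)
noncomputable def hfun (u : ℝ) : ℝ := Real.log (Real.exp u + sfun u)

lemma s_pos {u : ℝ} (hu : 0 < u) : 0 < sfun u := by
  have : (1:ℝ) < Real.exp (2*u) := by
    have := Real.add_one_le_exp (2*u); linarith
  exact Real.sqrt_pos.2 (by linarith)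

lemma s_sq {u : ℝ} (hu : 0 < u) : sfun u ^ 2 = Real.exp (2*u) - 1 := by
  have : (1:ℝ) < Real.exp (2*u) := by
    have := Real.add_one_le_exp (2*u); linarith
  exact Real.sq_sqrt (by linarith)

lemma hfun_pos {u : ℝ} (hu : 0 < u) : 0 < hfun u := by
  apply Real.log_pos
  have h1 : (1:ℝ) < Real.exp u := by have := Real.add_one_le_exp u; linarith
  have := (s_pos hu); linarith

lemma hasDerivAt_sfun {u : ℝ} (hu : 0 < u) :
    HasDerivAt sfun (Real.exp (2*u) / sfun u) u := by
  have h1 : HasDerivAt (fun v : ℝ => 2*v) 2 u := by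
    simpa using (hasDerivAt_id u).const_mul 2
  have h2 : HasDerivAt (fun v : ℝ => Real.exp (2*v) - 1) (Real.exp (2*u) * 2) u :=
    ((Real.hasDerivAt_exp (2*u)).comp u h1).sub_const 1
  have hne : Real.exp (2*u) - 1 ≠ 0 := by
    have := s_pos hu
    have := s_sq hu
    nlinarith
  have h3 := h2.sqrt hne
  convert h3 using 1
  · rfl
  rw [show Real.sqrt (Real.exp (2*u) - 1) = sfun u from rfl]
  have hs := (s_pos hu).ne'
  field_simp

lemma hasDerivAt_hfun {u : ℝ} (hu : 0 < u) :
    HasDerivAt hfun (Real.exp u / sfun u) u := by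
  have hs := s_pos hu
  have h1 : HasDerivAt (fun v : ℝ => Real.exp v + sfun v)
      (Real.exp u + Real.exp (2*u) / sfun u) u :=
    (Real.hasDerivAt_exp u).add (hasDerivAt_sfun hu)
  have hne : Real.exp u + sfun u ≠ 0 := by
    have := Real.exp_pos u; linarith
  have h2 := h1.log hne
  convert h2 using 1
  · rfl
  rw [show (2:ℝ)*u = u + u by ring, Real.exp_add]
  field_simp
  ring

noncomputable def phi (u : ℝ) : ℝ := 2 * u * Real.exp u / sfun u - hfun u

lemma hasDerivAt_phi {u : ℝ} (hu : 0 < u) :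
    HasDerivAt phi (Real.exp u * (Real.exp (2*u) - 1 - 2*u) / (sfun u)^3) u := by
  have hs := s_pos hu
  have hN : HasDerivAt (fun v : ℝ => 2 * v * Real.exp v)
      (2 * Real.exp u + 2 * u * Real.exp u) u := by
    have := ((hasDerivAt_id u).const_mul 2).mul (Real.hasDerivAt_exp u)
    exact this.congr_deriv (by simp only [id, mul_one])
  have hdiv := hN.div (hasDerivAt_sfun hu) hs.ne'
  have h := hdiv.sub (hasDerivAt_hfun hu)
  refine h.congr_deriv ?_
  have hE : Real.exp (2*u) = sfun u ^ 2 + 1 := by rw [s_sq hu]; ring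
  rw [hE]
  field_simp
  ring

lemma tendsto_phi : Tendsto phi (nhdsWithin 0 (Set.Ioi 0)) (nhds 0) := by
  have hh : Tendsto hfun (nhdsWithin 0 (Set.Ioi 0)) (nhds 0) := by
    have hc : ContinuousAt hfun 0 := by
      have hs : Continuous sfun := Real.continuous_sqrt.comp (by continuity)
      have harg : Continuous (fun v : ℝ => Real.exp v + sfun v) := by continuity
      have : Real.exp 0 + sfun 0 ≠ 0 := by
        simp [sfun]
      exact harg.continuousAt.log this
    have h0 : hfun 0 = 0 := by simp [hfun, sfun]
    simpa [h0] using hc.continuousWithinAt.tendsto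
  have ht1 : Tendsto (fun u => 2 * u * Real.exp u / sfun u)
      (nhdsWithin 0 (Set.Ioi 0)) (nhds 0) := by
    have hb : Tendsto (fun u : ℝ => Real.sqrt (2*u) * Real.exp u)
        (nhdsWithin 0 (Set.Ioi 0)) (nhds 0) := by
      have hc : Continuous (fun u : ℝ => Real.sqrt (2*u) * Real.exp u) := by continuity
      have h0 : Tendsto (fun u : ℝ => Real.sqrt (2*u) * Real.exp u)
          (nhdsWithin 0 (Set.Ioi 0)) (nhds (Real.sqrt (2*0) * Real.exp 0)) :=
        (hc.tendsto 0).mono_left nhdsWithin_le_nhds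
      simpa only [mul_zero, Real.sqrt_zero, Real.exp_zero, mul_one, zero_mul] using h0
    apply tendsto_of_tendsto_of_tendsto_of_le_of_le' tendsto_const_nhds hb
    · filter_upwards [self_mem_nhdsWithin] with u hu
      have hu' : (0:ℝ) < u := hu
      exact div_nonneg (by positivity) (s_pos hu').le
    · filter_upwards [self_mem_nhdsWithin] with u hu
      have hu' : (0:ℝ) < u := hu
      have hs := s_pos hu'
      have h2u : (0:ℝ) < 2*u := by linarith
      have hsq : Real.sqrt (2*u) ≤ sfun u := by
        apply Real.sqrt_le_sqrt
        have := Real.add_one_le_exp (2*u); linarith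
      have hsqpos : 0 < Real.sqrt (2*u) := Real.sqrt_pos.2 h2u
      have hstep : 2 * u * Real.exp u / sfun u ≤ 2 * u * Real.exp u / Real.sqrt (2*u) := by
        apply div_le_div_of_nonneg_left _ hsqpos hsq
        positivity
      have heq : 2 * u * Real.exp u / Real.sqrt (2*u) = Real.sqrt (2*u) * Real.exp u := by
        have hms : Real.sqrt (2*u) * Real.sqrt (2*u) = 2*u := Real.mul_self_sqrt (by linarith)
        rw [div_eq_iff hsqpos.ne']; linear_combination (-Real.exp u) * hms
      rw [heq] at hstep; exact hstep
  have := ht1.sub hh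
  simpa [show phi = fun u => 2 * u * Real.exp u / sfun u - hfun u from rfl] using this

lemma phi_mono : MonotoneOn phi (Set.Ioi 0) := by
  have hderiv : ∀ u ∈ Set.Ioi (0:ℝ),
      HasDerivAt phi (Real.exp u * (Real.exp (2*u) - 1 - 2*u) / (sfun u)^3) u :=
    fun u hu => hasDerivAt_phi hu
  apply monotoneOn_of_deriv_nonneg (convex_Ioi 0)
  · exact fun u hu => (hderiv u hu).continuousAt.continuousWithinAt
  · rw [interior_Ioi]
    exact fun u hu => (hderiv u hu).differentiableAt.differentiableWithinAt
  · rw [interior_Ioi]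
    intro u hu
    rw [(hderiv u hu).deriv]
    have hu' : (0:ℝ) < u := hu
    have h1 : 2*u + 1 ≤ Real.exp (2*u) := by have := Real.add_one_le_exp (2*u); linarith
    have hs := s_pos hu'
    apply div_nonneg _ (by positivity)
    have := Real.exp_pos u
    nlinarith

lemma phi_nonneg {u : ℝ} (hu : 0 < u) : 0 ≤ phi u := by
  apply le_of_tendsto tendsto_phi
  filter_upwards [Ioc_mem_nhdsGT_of_mem (show (0:ℝ) ∈ Set.Ico 0 u from ⟨le_refl 0, hu⟩)]
    with v hv
  exact phi_mono hv.1 hu hv.2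

lemma key {u : ℝ} (hu : 0 < u) : hfun u ≤ 2 * u * Real.exp u / sfun u := by
  have := phi_nonneg hu
  unfold phi at this
  linarith

noncomputable def G (u : ℝ) : ℝ := hfun u / Real.sqrt u

lemma hasDerivAt_G {u : ℝ} (hu : 0 < u) :
    HasDerivAt G ((Real.exp u / sfun u * Real.sqrt u - hfun u * (1 / (2 * Real.sqrt u)))
      / (Real.sqrt u)^2) u := by
  exact (hasDerivAt_hfun hu).div (Real.hasDerivAt_sqrt hu.ne') (Real.sqrt_ne_zero'.2 hu)

lemma G_mono : MonotoneOn G (Set.Ioi 0) := by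
  apply monotoneOn_of_deriv_nonneg (convex_Ioi 0)
  · exact fun u hu => (hasDerivAt_G hu).continuousAt.continuousWithinAt
  · rw [interior_Ioi]
    exact fun u hu => (hasDerivAt_G hu).differentiableAt.differentiableWithinAt
  · rw [interior_Ioi]
    intro u hu
    have hu' : (0:ℝ) < u := hu
    rw [(hasDerivAt_G hu').deriv]
    have hs := s_pos hu'
    have hsu : (0:ℝ) < Real.sqrt u := Real.sqrt_pos.2 hu'
    have hms : Real.sqrt u * Real.sqrt u = u := Real.mul_self_sqrt hu'.le
    apply div_nonneg _ (by positivity)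
    have hk := key hu'
    have h2 : hfun u * (1 / (2 * Real.sqrt u)) ≤
        (2 * u * Real.exp u / sfun u) * (1 / (2 * Real.sqrt u)) := by
      apply mul_le_mul_of_nonneg_right hk
      positivity
    have h3 : (2 * u * Real.exp u / sfun u) * (1 / (2 * Real.sqrt u)) =
        Real.exp u / sfun u * Real.sqrt u := by
      field_simp
      linear_combination (-1) * hms
    linarith

/-- For fixed `T > 0`, the function `f₂(x) = √x / log(e^{Tx} + √(e^{2Tx} − 1))`
is decreasing on `(0,∞)`. -/
theorem f_two_decreasing (T : ℝ) (hT : 0 < T) :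
    AntitoneOn
      (fun x : ℝ =>
        Real.sqrt x / Real.log (Real.exp (T * x) + Real.sqrt (Real.exp (2 * T * x) - 1)))
      (Set.Ioi 0) := by
  intro x hx y hy hxy
  simp only [Set.mem_Ioi] at hx hy
  have hrw : ∀ z : ℝ, Real.log (Real.exp (T * z) + Real.sqrt (Real.exp (2 * T * z) - 1))
      = hfun (T * z) := by
    intro z
    simp only [hfun, sfun]
    ring_nf
  dsimp only
  rw [hrw, hrw]
  have hTx : 0 < T * x := by positivity
  have hTy : 0 < T * y := by positivity
  have hpx := hfun_pos hTx
  have hpy := hfun_pos hTy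
  have hG : hfun (T*x) / Real.sqrt (T*x) ≤ hfun (T*y) / Real.sqrt (T*y) :=
    G_mono (Set.mem_Ioi.2 hTx) (Set.mem_Ioi.2 hTy)
      (mul_le_mul_of_nonneg_left hxy hT.le)
  have hsx : 0 < Real.sqrt (T*x) := Real.sqrt_pos.2 hTx
  have hsy : 0 < Real.sqrt (T*y) := Real.sqrt_pos.2 hTy
  have hcross : hfun (T*x) * Real.sqrt (T*y) ≤ hfun (T*y) * Real.sqrt (T*x) :=
    (div_le_div_iff₀ hsx hsy).1 hG
  rw [Real.sqrt_mul hT.le, Real.sqrt_mul hT.le] at hcross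
  have hsT : 0 < Real.sqrt T := Real.sqrt_pos.2 hT
  have hc2 : hfun (T*x) * Real.sqrt y ≤ hfun (T*y) * Real.sqrt x := by
    nlinarith [hcross, hsT]
  rw [div_le_div_iff₀ hpy hpx]
  nlinarith [hc2]
end

section
/- For every real y with 0 < y < 1 one has (1 + y/2)·log(1 + y) + (1 − y/2)·log(1 − y) ≤ 0. -/
open Real Set

lemma logA_aux (y : ℝ) (hy : 0 ≤ y) :
    Real.log (1 + y) ≤ y - y^2/2 + y^3/3 - y^4/4 + y^5/5 := by
  set F : ℝ → ℝ := fun t => t - t^2/2 + t^3/3 - t^4/4 + t^5/5 - Real.log (1 + t) with hF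
  have hd : ∀ x : ℝ, 0 ≤ x → HasDerivAt F (1 - x + x^2 - x^3 + x^4 - 1/(1+x)) x := by
    intro x hx
    have h1 : (1 : ℝ) + x ≠ 0 := by linarith
    have hlog : HasDerivAt (fun t : ℝ => Real.log (1 + t)) (1/(1+x)) x := by
      have := ((hasDerivAt_id x).const_add 1).log h1
      simpa using this
    have hpoly : HasDerivAt (fun t : ℝ => t - t^2/2 + t^3/3 - t^4/4 + t^5/5)
        (1 - x + x^2 - x^3 + x^4) x := by
      have := (((((hasDerivAt_pow 1 x).sub ((hasDerivAt_pow 2 x).div_const 2)).add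
        ((hasDerivAt_pow 3 x).div_const 3)).sub ((hasDerivAt_pow 4 x).div_const 4)).add
        ((hasDerivAt_pow 5 x).div_const 5))
      convert this using 1
      · rfl
      · rfl
      · ext t; simp only [Pi.add_apply, Pi.sub_apply, Pi.neg_apply]; ring
      · ring
    exact hpoly.sub hlog
  have hmono : MonotoneOn F (Ici (0:ℝ)) := by
    apply monotoneOn_of_deriv_nonneg (convex_Ici 0)
    · intro x hx
      exact (hd x hx).continuousAt.continuousWithinAt
    · intro x hx
      rw [interior_Ici] at hx
      exact (hd x hx.le).differentiableAt.differentiableWithinAt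
    · intro x hx
      rw [interior_Ici] at hx
      have hx0 : (0:ℝ) < x := hx
      rw [(hd x hx0.le).deriv]
      have h1 : (0:ℝ) < 1 + x := by linarith
      have : 1 - x + x^2 - x^3 + x^4 - 1/(1+x) = x^5/(1+x) := by
        rw [eq_div_iff h1.ne']; field_simp; ring
      rw [this]
      positivity
  have h0 : F 0 ≤ F y := hmono (mem_Ici.mpr (le_refl 0)) (mem_Ici.mpr hy) hy
  simp [hF] at h0
  linarith
lemma logB_aux (y : ℝ) (hy : 0 ≤ y) (hy1 : y < 1) :
    Real.log (1 - y) ≤ -(y + y^2/2 + y^3/3 + y^4/4 + y^5/5 + y^6/6) := by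
  set F : ℝ → ℝ := fun t => -(t + t^2/2 + t^3/3 + t^4/4 + t^5/5 + t^6/6) - Real.log (1 - t) with hF
  have hd : ∀ x : ℝ, x ∈ Ico (0:ℝ) 1 → HasDerivAt F
      (-(1 + x + x^2 + x^3 + x^4 + x^5) + 1/(1-x)) x := by
    intro x hx
    have h1 : (1 : ℝ) - x ≠ 0 := by cases hx; intro h; linarith
    have hlog : HasDerivAt (fun t : ℝ => Real.log (1 - t)) (-(1/(1-x))) x := by
      have := ((hasDerivAt_id x).const_sub 1).log h1
      simp only [id] at this
      convert this using 1
      field_simp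
    have hpoly : HasDerivAt (fun t : ℝ => -(t + t^2/2 + t^3/3 + t^4/4 + t^5/5 + t^6/6))
        (-(1 + x + x^2 + x^3 + x^4 + x^5)) x := by
      have := ((((((hasDerivAt_pow 1 x).add ((hasDerivAt_pow 2 x).div_const 2)).add
        ((hasDerivAt_pow 3 x).div_const 3)).add ((hasDerivAt_pow 4 x).div_const 4)).add
        ((hasDerivAt_pow 5 x).div_const 5)).add ((hasDerivAt_pow 6 x).div_const 6)).neg
      convert this using 1
      · rfl
      · rfl
      · ext t; simp only [Pi.add_apply, Pi.sub_apply, Pi.neg_apply]; ring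
      · ring
    have := hpoly.sub hlog
    convert this using 1
    · rfl
    · rfl
    · ext t; simp only [hF, Pi.sub_apply]
    · ring
  have hmono : MonotoneOn F (Ico (0:ℝ) 1) := by
    apply monotoneOn_of_deriv_nonneg (convex_Ico 0 1)
    · intro x hx
      exact (hd x hx).continuousAt.continuousWithinAt
    · intro x hx
      rw [interior_Ico] at hx
      exact (hd x ⟨hx.1.le, hx.2⟩).differentiableAt.differentiableWithinAt
    · intro x hx
      rw [interior_Ico] at hx
      rw [(hd x ⟨hx.1.le, hx.2⟩).deriv]
      have h1 : (0:ℝ) < 1 - x := by linarith [hx.2]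
      have : -(1 + x + x^2 + x^3 + x^4 + x^5) + 1/(1-x) = x^6/(1-x) := by
        field_simp; ring
      rw [this]
      positivity
  have h0 : F 0 ≤ F y := hmono ⟨le_refl 0, one_pos⟩ ⟨hy, hy1⟩ hy
  simp [hF] at h0
  linarith

/-- For every `0 < y < 1`, `(1 + y/2)·log(1 + y) + (1 − y/2)·log(1 − y) ≤ 0`. -/
theorem log_combination_nonpos (y : ℝ) (hy0 : 0 < y) (hy1 : y < 1) :
    (1 + y / 2) * Real.log (1 + y) + (1 - y / 2) * Real.log (1 - y) ≤ 0 := by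
  have hA := logA_aux y hy0.le
  have hB := logB_aux y hy0.le hy1
  have h1 : (0:ℝ) ≤ 1 + y / 2 := by linarith
  have h2 : (0:ℝ) ≤ 1 - y / 2 := by linarith
  have hA' := mul_le_mul_of_nonneg_left hA h1
  have hB' := mul_le_mul_of_nonneg_left hB h2
  -- (1+y/2)P - (1-y/2)Q = -y^4/6 + y^6/30 + y^7/12 ≤ 0 for 0 < y < 1
  nlinarith [hA', hB', pow_pos hy0 4, mul_pos (pow_pos hy0 4) (sub_pos.mpr hy1),
    mul_nonneg (pow_pos hy0 4).le (sq_nonneg (1 - y)),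
    mul_nonneg (mul_nonneg (pow_pos hy0 4).le (sub_pos.mpr hy1).le) hy0.le,
    mul_nonneg (pow_pos hy0 4).le (mul_nonneg (sub_nonneg.mpr hy1.le) (sub_nonneg.mpr hy1.le))]
end
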